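/- arXiv:1702.08476 — 2 statements merged into one kernel-verified Lean document; each statement's English description precedes it below -/
import Mathlib

section
/- For any random variables X over a finite set 𝒳 and Y over a finite set 𝒴, the weak chain rule holds: H̃_∞(X|Y) ≥ H_∞(X,Y) − log|𝒴| and also H̃_∞(X|Y) ≥ H_∞(X) − log|𝒴|. -/
open Finset Real
open scoped Classical

noncomputable section

/-- Probability of an event under a mass function on a finite sample space. -/
def pr {Ω : Type*} [Fintype Ω] (μ : Ω → ℝ) (E : Ω → Prop) : ℝ :=
  ∑ ω ∈ Finset.univ.filter E, μ ω

/-- Conditional probability Pr[A | E]. -/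
def condPr {Ω : Type*} [Fintype Ω] (μ : Ω → ℝ) (A E : Ω → Prop) : ℝ :=
  pr μ (fun ω => A ω ∧ E ω) / pr μ E

/-- max_x Pr[X = x]. -/
def maxProb {Ω 𝒳 : Type*} [Fintype Ω] [Fintype 𝒳] (μ : Ω → ℝ) (X : Ω → 𝒳) : ℝ :=
  ⨆ x : 𝒳, pr μ (fun ω => X ω = x)

/-- Min-entropy H_∞(X) = -log₂ max_x Pr[X=x]. -/
def Hinf {Ω 𝒳 : Type*} [Fintype Ω] [Fintype 𝒳] (μ : Ω → ℝ) (X : Ω → 𝒳) : ℝ :=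
  - Real.logb 2 (maxProb μ X)

/-- max_x Pr[X = x | E]. -/
def maxCondProb {Ω 𝒳 : Type*} [Fintype Ω] [Fintype 𝒳] (μ : Ω → ℝ) (X : Ω → 𝒳)
    (E : Ω → Prop) : ℝ :=
  ⨆ x : 𝒳, condPr μ (fun ω => X ω = x) E

/-- Min-entropy of X conditioned on an event E. -/
def Hcond {Ω 𝒳 : Type*} [Fintype Ω] [Fintype 𝒳] (μ : Ω → ℝ) (X : Ω → 𝒳)
    (E : Ω → Prop) : ℝ :=
  - Real.logb 2 (maxCondProb μ X E)

/-- Worst-case conditional min-entropy H_∞(X|Y) = min over y with Pr[Y=y]>0. -/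
def HwInf {Ω 𝒳 𝒴 : Type*} [Fintype Ω] [Fintype 𝒳] [Fintype 𝒴] (μ : Ω → ℝ)
    (X : Ω → 𝒳) (Y : Ω → 𝒴) : ℝ :=
  sInf {h | ∃ y, 0 < pr μ (fun ω => Y ω = y) ∧ h = Hcond μ X (fun ω => Y ω = y)}

/-- Average conditional min-entropy H̃_∞(X|Y). -/
def Hav {Ω 𝒳 𝒴 : Type*} [Fintype Ω] [Fintype 𝒳] [Fintype 𝒴] (μ : Ω → ℝ)
    (X : Ω → 𝒳) (Y : Ω → 𝒴) : ℝ :=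
  - Real.logb 2 (∑ y : 𝒴, pr μ (fun ω => Y ω = y) * maxCondProb μ X (fun ω => Y ω = y))

/-- Conditional mass function given an event B. -/
def condμ {Ω : Type*} [Fintype Ω] (μ : Ω → ℝ) (B : Ω → Prop) : Ω → ℝ :=
  fun ω => if B ω then μ ω / pr μ B else 0

/-- Weak chain rule: H̃_∞(X|Y) ≥ H_∞(X,Y) − log|𝒴| and H̃_∞(X|Y) ≥ H_∞(X) − log|𝒴|. -/
theorem stmt4 {Ω 𝒳 𝒴 : Type*} [Fintype Ω] [Fintype 𝒳] [Fintype 𝒴]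
    (μ : Ω → ℝ) (hμ0 : ∀ ω, 0 ≤ μ ω) (hμ1 : ∑ ω, μ ω = 1)
    (X : Ω → 𝒳) (Y : Ω → 𝒴) :
    Hav μ X Y ≥ Hinf μ (fun ω => (X ω, Y ω)) - Real.logb 2 (Fintype.card 𝒴) ∧
    Hav μ X Y ≥ Hinf μ X - Real.logb 2 (Fintype.card 𝒴) := by
  classical
  have hΩ : Nonempty Ω := by
    by_contra h
    rw [not_nonempty_iff] at h
    rw [Finset.univ_eq_empty, Finset.sum_empty] at hμ1
    exact one_ne_zero hμ1.symm
  have h𝒳 : Nonempty 𝒳 := ⟨X (Classical.choice hΩ)⟩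
  have h𝒴 : Nonempty 𝒴 := ⟨Y (Classical.choice hΩ)⟩
  obtain ⟨ω0, hω0⟩ : ∃ ω, 0 < μ ω := by
    by_contra h
    push_neg at h
    have h0 : ∑ ω, μ ω = 0 := Finset.sum_eq_zero fun ω _ => le_antisymm (h ω) (hμ0 ω)
    exact one_ne_zero (hμ1 ▸ h0)
  have prnn : ∀ E : Ω → Prop, 0 ≤ pr μ E := fun E =>
    Finset.sum_nonneg fun ω _ => hμ0 ω
  have prmono : ∀ A B : Ω → Prop, (∀ ω, A ω → B ω) → pr μ A ≤ pr μ B := by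
    intro A B h
    apply Finset.sum_le_sum_of_subset_of_nonneg
    · intro ω hω
      simp only [Finset.mem_filter, Finset.mem_univ, true_and] at hω ⊢
      exact h ω hω
    · intro ω _ _; exact hμ0 ω
  have prsingle : ∀ (E : Ω → Prop), E ω0 → μ ω0 ≤ pr μ E := by
    intro E hE
    exact Finset.single_le_sum (fun ω _ => hμ0 ω)
      (by simp [Finset.mem_filter, hE])
  -- pr of joint event equals pr of conjunction
  have prjoint : ∀ (x : 𝒳) (y : 𝒴),
      pr μ (fun ω => (X ω, Y ω) = (x, y)) = pr μ (fun ω => X ω = x ∧ Y ω = y) := by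
    intro x y
    unfold pr
    congr 1
    ext ω
    simp [Prod.ext_iff]
  set MJ := maxProb μ (fun ω => (X ω, Y ω)) with hMJ
  set MX := maxProb μ X with hMX
  have hMJpos : 0 < MJ := by
    refine lt_of_lt_of_le hω0 (le_trans (prsingle (fun ω => (X ω, Y ω) = (X ω0, Y ω0)) rfl) ?_)
    rw [hMJ]; unfold maxProb
    exact le_ciSup (f := fun z => pr μ fun ω => (X ω, Y ω) = z) (Finite.bddAbove_range _) (X ω0, Y ω0)
  have hMXpos : 0 < MX := by
    refine lt_of_lt_of_le hω0 (le_trans (prsingle (fun ω => X ω = X ω0) rfl) ?_)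
    rw [hMX]; unfold maxProb
    exact le_ciSup (f := fun x => pr μ fun ω => X ω = x) (Finite.bddAbove_range _) (X ω0)
  -- pointwise bound
  have key : ∀ (M : ℝ), 0 < M →
      (∀ x y, pr μ (fun ω => X ω = x ∧ Y ω = y) ≤ M) →
      ∀ y, pr μ (fun ω => Y ω = y) * maxCondProb μ X (fun ω => Y ω = y) ≤ M := by
    intro M hM hb y
    rcases eq_or_lt_of_le (prnn (fun ω => Y ω = y)) with h | h
    · rw [← h, zero_mul]; exact le_of_lt hM
    · rw [mul_comm, ← le_div_iff₀ h]
      unfold maxCondProb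
      apply ciSup_le
      intro x
      unfold condPr
      exact div_le_div_of_nonneg_right (hb x y) h.le
  set S := ∑ y : 𝒴, pr μ (fun ω => Y ω = y) * maxCondProb μ X (fun ω => Y ω = y) with hS
  have hSpos : 0 < S := by
    apply Finset.sum_pos'
    · intro y _
      apply mul_nonneg (prnn _)
      unfold maxCondProb
      refine le_trans ?_ (le_ciSup (f := fun x => condPr μ (fun ω => X ω = x) fun ω => Y ω = y) (Finite.bddAbove_range _) (X ω0))
      exact div_nonneg (prnn _) (prnn _)
    · refine ⟨Y ω0, Finset.mem_univ _, ?_⟩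
      have hpy : 0 < pr μ (fun ω => Y ω = Y ω0) :=
        lt_of_lt_of_le hω0 (prsingle (fun ω => Y ω = Y ω0) rfl)
      have h1 : condPr μ (fun ω => X ω = X ω0) (fun ω => Y ω = Y ω0) ≤
          maxCondProb μ X (fun ω => Y ω = Y ω0) := by
        unfold maxCondProb
        exact le_ciSup (f := fun x => condPr μ (fun ω => X ω = x) fun ω => Y ω = Y ω0) (Finite.bddAbove_range _) (X ω0)
      have h2 : 0 < condPr μ (fun ω => X ω = X ω0) (fun ω => Y ω = Y ω0) := by
        unfold condPr
        exact div_pos (lt_of_lt_of_le hω0 (prsingle (fun ω => X ω = X ω0 ∧ Y ω = Y ω0) ⟨rfl, rfl⟩)) hpy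
      exact mul_pos hpy (lt_of_lt_of_le h2 h1)
  set c := (Fintype.card 𝒴 : ℝ) with hc
  have hcpos : 0 < c := by
    simp only [hc, Nat.cast_pos]
    exact Fintype.card_pos
  have sumbound : ∀ (M : ℝ), 0 < M →
      (∀ x y, pr μ (fun ω => X ω = x ∧ Y ω = y) ≤ M) → S ≤ c * M := by
    intro M hM hb
    calc S ≤ ∑ _y : 𝒴, M := Finset.sum_le_sum fun y _ => key M hM hb y
    _ = c * M := by rw [Finset.sum_const, Finset.card_univ, nsmul_eq_mul]
  have final : ∀ (M : ℝ), 0 < M →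
      (∀ x y, pr μ (fun ω => X ω = x ∧ Y ω = y) ≤ M) →
      Hav μ X Y ≥ - Real.logb 2 M - Real.logb 2 c := by
    intro M hM hb
    have h1 : Real.logb 2 S ≤ Real.logb 2 (c * M) :=
      Real.logb_le_logb_of_le (by norm_num) hSpos (sumbound M hM hb)
    rw [Real.logb_mul (ne_of_gt hcpos) (ne_of_gt hM)] at h1
    unfold Hav
    rw [← hS]
    linarith
  constructor
  · have := final MJ hMJpos (fun x y => by
      rw [← prjoint, hMJ]
      unfold maxProb
      exact le_ciSup (f := fun z => pr μ fun ω => (X ω, Y ω) = z) (Finite.bddAbove_range _) (x, y))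
    unfold Hinf
    rw [show maxProb μ (fun ω => (X ω, Y ω)) = MJ from hMJ.symm]
    linarith [this]
  · have := final MX hMXpos (fun x y => by
      refine le_trans (prmono _ _ fun ω h => h.1) ?_
      rw [hMX]; unfold maxProb
      exact le_ciSup (f := fun x => pr μ fun ω => X ω = x) (Finite.bddAbove_range _) x)
    unfold Hinf
    rw [show maxProb μ X = MX from hMX.symm]
    linarith [this]
end
end

section
/- Let X = (X_1,…,X_t) be random variables over a finite alphabet 𝒳. For any 0 < ε < 1 and δ > 0, there exists a collection ℬ of pairwise disjoint subsets of 𝒳^t such that: (a) log|ℬ| ≤ t·C·(log log|𝒳| + log log(1/ε) + log(t/δ)) for an absolute constant C (assuming |𝒳| ≥ 4, ε ≤ 1/4, δ ≤ t); (b) Σ_{B∈ℬ} Pr[X ∈ B] ≥ 1 − ε; and (c) for every B ∈ ℬ, every i, and all x, x' ∈ B in the support, 2^{−Cδ} ≤ Pr[X_i=x_i|X_{<i}=x_{<i}]/Pr[X_i=x'_i|X_{<i}=x'_{<i}] ≤ 2^{Cδ}. -/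
open Finset Real
open scoped Classical

noncomputable section

/-- Probability that the first `i` coordinates agree with `x`: Pr[X_{<i} = x_{<i}]. -/
def prefixPr {𝒳 : Type*} [Fintype 𝒳] {t : ℕ} (p : (Fin t → 𝒳) → ℝ)
    (x : Fin t → 𝒳) (i : ℕ) : ℝ :=
  ∑ y ∈ Finset.univ.filter (fun y : Fin t → 𝒳 => ∀ j : Fin t, (j : ℕ) < i → y j = x j), p y

/-- One-step conditional probability Pr[X_i = x_i | X_{<i} = x_{<i}]. -/
def condStep {𝒳 : Type*} [Fintype 𝒳] {t : ℕ} (p : (Fin t → 𝒳) → ℝ)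
    (x : Fin t → 𝒳) (i : ℕ) : ℝ :=
  prefixPr p x (i + 1) / prefixPr p x i

/-- Surprise of the i-th block: r^i(x) = -log₂ Pr[X_i = x_i | X_{<i} = x_{<i}]. -/
def surprise {𝒳 : Type*} [Fintype 𝒳] {t : ℕ} (p : (Fin t → 𝒳) → ℝ)
    (x : Fin t → 𝒳) (i : ℕ) : ℝ :=
  - Real.logb 2 (condStep p x i)

section aux

variable {𝒳 : Type*} [Fintype 𝒳] {t : ℕ} {p : (Fin t → 𝒳) → ℝ}

lemma self_le_prefixPr (hp : ∀ x, 0 ≤ p x) (x : Fin t → 𝒳) (i : ℕ) :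
    p x ≤ prefixPr p x i :=
  Finset.single_le_sum (fun y _ => hp y) (by simp)

lemma prefixPr_succ_le (hp : ∀ x, 0 ≤ p x) (x : Fin t → 𝒳) (i : ℕ) :
    prefixPr p x (i + 1) ≤ prefixPr p x i := by
  apply Finset.sum_le_sum_of_subset_of_nonneg
  · intro y hy
    simp only [Finset.mem_filter, Finset.mem_univ, true_and] at hy ⊢
    exact fun j hj => hy j (by omega)
  · exact fun y _ _ => hp y

lemma prefixPr_le_one (hp : ∀ x, 0 ≤ p x) (hs : ∑ x, p x = 1)
    (x : Fin t → 𝒳) (i : ℕ) : prefixPr p x i ≤ 1 := by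
  rw [← hs]
  exact Finset.sum_le_sum_of_subset_of_nonneg (Finset.filter_subset _ _) fun y _ _ => hp y

lemma le_condStep (hp : ∀ x, 0 ≤ p x) (hs : ∑ x, p x = 1) {x : Fin t → 𝒳}
    (hx : 0 < p x) (i : ℕ) : p x ≤ condStep p x i := by
  have h1 : 0 < prefixPr p x i := lt_of_lt_of_le hx (self_le_prefixPr hp x i)
  rw [condStep, le_div_iff₀ h1]
  calc p x * prefixPr p x i ≤ p x * 1 := by
        have := prefixPr_le_one hp hs x i
        nlinarith
    _ ≤ prefixPr p x (i + 1) := by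
        rw [mul_one]; exact self_le_prefixPr hp x (i + 1)

lemma condStep_le_one (hp : ∀ x, 0 ≤ p x) {x : Fin t → 𝒳}
    (hx : 0 < p x) (i : ℕ) : condStep p x i ≤ 1 := by
  have h1 : 0 < prefixPr p x i := lt_of_lt_of_le hx (self_le_prefixPr hp x i)
  rw [condStep, div_le_one h1]
  exact prefixPr_succ_le hp x i

end aux

set_option maxHeartbeats 2000000 in
/-- Main theorem: exhibiting near-flat block-source structure with few spoiled bits. -/
theorem stmt12 :
    ∃ C : ℝ, 0 < C ∧
      ∀ (𝒳 : Type) [Fintype 𝒳], 4 ≤ Fintype.card 𝒳 →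
      ∀ t : ℕ, 1 ≤ t →
      ∀ p : (Fin t → 𝒳) → ℝ, (∀ x, 0 ≤ p x) → (∑ x, p x = 1) →
      ∀ ε δ : ℝ, 0 < ε → ε ≤ 1 / 4 → 0 < δ → δ ≤ t →
      ∃ ℬ : Finset (Finset (Fin t → 𝒳)),
        (ℬ : Set (Finset (Fin t → 𝒳))).PairwiseDisjoint id ∧
        Real.logb 2 ℬ.card ≤
          t * C * (Real.logb 2 (Real.logb 2 (Fintype.card 𝒳)) +
            Real.logb 2 (Real.logb 2 (1 / ε)) + Real.logb 2 (t / δ)) ∧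
        1 - ε ≤ ∑ B ∈ ℬ, ∑ x ∈ B, p x ∧
        ∀ B ∈ ℬ, ∀ i : Fin t, ∀ x ∈ B, ∀ x' ∈ B, 0 < p x → 0 < p x' →
          condStep p x i ≤ (2 : ℝ) ^ (C * δ) * condStep p x' i := by
  refine ⟨3, by norm_num, ?_⟩
  intro 𝒳 _ hcard t ht p hp hsum ε δ hε hε4 hδ hδt
  have htR : (1:ℝ) ≤ (t:ℝ) := by exact_mod_cast ht
  have hcardR : (4:ℝ) ≤ (Fintype.card 𝒳 : ℝ) := by exact_mod_cast hcard
  have hcardpos : (0:ℝ) < ((Fintype.card 𝒳 : ℝ))^t := by positivity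
  set τ : ℝ := ε / ((Fintype.card 𝒳 : ℝ))^t with hτdef
  have hτpos : 0 < τ := div_pos hε hcardpos
  set L := Real.logb 2 (Fintype.card 𝒳 : ℝ) with hLdef
  set E := Real.logb 2 (1/ε) with hEdef
  have hL2 : (2:ℝ) ≤ L := by
    have h4 : Real.logb 2 (4:ℝ) = 2 := by
      rw [show (4:ℝ) = 2^(2:ℕ) by norm_num, Real.logb_pow,
        Real.logb_self_eq_one (by norm_num)]
      norm_num
    rw [← h4, hLdef]
    exact Real.logb_le_logb_of_le (by norm_num) (by norm_num) hcardR
  have hE2 : (2:ℝ) ≤ E := by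
    have h4 : (4:ℝ) ≤ 1/ε := by
      rw [le_div_iff₀ hε]; linarith
    have h4' : Real.logb 2 (4:ℝ) = 2 := by
      rw [show (4:ℝ) = 2^(2:ℕ) by norm_num, Real.logb_pow,
        Real.logb_self_eq_one (by norm_num)]
      norm_num
    rw [← h4', hEdef]
    exact Real.logb_le_logb_of_le (by norm_num) (by norm_num) h4
  set M := (t:ℝ) * L + E with hMdef
  have hMpos : 0 < M := by nlinarith
  have hτlog : Real.logb 2 τ = -M := by
    have h1 : Real.logb 2 ε = -E := by rw [hEdef, one_div, Real.logb_inv, neg_neg]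
    have h2 : Real.logb 2 τ = Real.logb 2 ε - (t:ℝ) * L := by
      rw [hτdef, Real.logb_div (ne_of_gt hε) (ne_of_gt hcardpos), Real.logb_pow, hLdef]
    rw [h2, h1, hMdef]; ring
  set N : ℕ := ⌈M/δ⌉₊ + 1 with hNdef
  set good : Finset (Fin t → 𝒳) := Finset.univ.filter (fun x => τ ≤ p x) with hgooddef
  have hgoodpos : ∀ x ∈ good, 0 < p x := by
    intro x hx
    rw [hgooddef, Finset.mem_filter] at hx
    exact lt_of_lt_of_le hτpos hx.2
  -- surprise bounds on good
  have hsb : ∀ x ∈ good, ∀ i : ℕ, 0 ≤ surprise p x i ∧ surprise p x i < N * δ := by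
    intro x hx i
    have hxg : τ ≤ p x := by
      rw [hgooddef, Finset.mem_filter] at hx; exact hx.2
    have hpxpos : 0 < p x := lt_of_lt_of_le hτpos hxg
    have hc1 : condStep p x i ≤ 1 := condStep_le_one hp hpxpos i
    have hc0 : τ ≤ condStep p x i := le_trans hxg (le_condStep hp hsum hpxpos i)
    have hcpos : 0 < condStep p x i := lt_of_lt_of_le hτpos hc0
    constructor
    · have := Real.logb_nonpos (b := 2) (by norm_num) hcpos.le hc1
      simp only [surprise]; linarith
    · have hmono : Real.logb 2 τ ≤ Real.logb 2 (condStep p x i) :=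
        Real.logb_le_logb_of_le (by norm_num) hτpos hc0
      have hM' : surprise p x i ≤ M := by
        simp only [surprise]; rw [hτlog] at hmono; linarith
      have hNδ : M < (N:ℝ) * δ := by
        have h1 : M/δ ≤ (⌈M/δ⌉₊ : ℝ) := Nat.le_ceil _
        have h2 : (N:ℝ) = (⌈M/δ⌉₊ : ℝ) + 1 := by rw [hNdef]; push_cast; ring
        rw [h2]
        calc M = (M/δ) * δ := by field_simp
          _ ≤ (⌈M/δ⌉₊ : ℝ) * δ := by nlinarith
          _ < ((⌈M/δ⌉₊ : ℝ) + 1) * δ := by nlinarith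
      linarith
  -- buckets
  set bkt : (Fin t → Fin N) → Finset (Fin t → 𝒳) := fun f =>
    good.filter (fun x => ∀ i : Fin t,
      ((f i : ℕ) : ℝ) * δ ≤ surprise p x (i : ℕ) ∧
        surprise p x (i : ℕ) < (((f i : ℕ) : ℝ) + 1) * δ) with hbktdef
  have hbkt_sub : ∀ f, bkt f ⊆ good := fun f => Finset.filter_subset _ _
  -- uniqueness
  have huniq : ∀ f f' : Fin t → Fin N, ∀ x : Fin t → 𝒳,
      x ∈ bkt f → x ∈ bkt f' → f = f' := by
    intro f f' x hxf hxf'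
    funext i
    rw [hbktdef, Finset.mem_filter] at hxf hxf'
    obtain ⟨h1, h2⟩ := hxf.2 i
    obtain ⟨h1', h2'⟩ := hxf'.2 i
    have e1 : ((f i : ℕ) : ℝ) < ((f' i : ℕ) : ℝ) + 1 := by
      by_contra h
      push_neg at h
      have : (((f' i : ℕ) : ℝ) + 1) * δ ≤ ((f i : ℕ) : ℝ) * δ := by nlinarith
      linarith
    have e2 : ((f' i : ℕ) : ℝ) < ((f i : ℕ) : ℝ) + 1 := by
      by_contra h
      push_neg at h
      have : (((f i : ℕ) : ℝ) + 1) * δ ≤ ((f' i : ℕ) : ℝ) * δ := by nlinarith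
      linarith
    have : (f i : ℕ) = (f' i : ℕ) := by
      have b1 : (f i : ℕ) < (f' i : ℕ) + 1 := by exact_mod_cast e1
      have b2 : (f' i : ℕ) < (f i : ℕ) + 1 := by exact_mod_cast e2
      omega
    exact Fin.ext this
  -- membership of good points
  have hmem : ∀ x ∈ good, ∃ f : Fin t → Fin N, x ∈ bkt f := by
    intro x hx
    have hflt : ∀ i : Fin t, ⌊surprise p x (i : ℕ) / δ⌋₊ < N := by
      intro i
      obtain ⟨hs0, hsN⟩ := hsb x hx (i : ℕ)
      have : surprise p x (i : ℕ) / δ < (N : ℝ) := by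
        rw [div_lt_iff₀ hδ]; linarith
      exact_mod_cast Nat.floor_lt (by positivity) |>.mpr this
    refine ⟨fun i => ⟨⌊surprise p x (i : ℕ) / δ⌋₊, hflt i⟩, ?_⟩
    rw [hbktdef, Finset.mem_filter]
    refine ⟨hx, fun i => ?_⟩
    obtain ⟨hs0, _⟩ := hsb x hx (i : ℕ)
    have hdiv0 : 0 ≤ surprise p x (i : ℕ) / δ := by positivity
    constructor
    · have := Nat.floor_le hdiv0
      calc ((⌊surprise p x (i : ℕ) / δ⌋₊ : ℕ) : ℝ) * δ
          ≤ (surprise p x (i : ℕ) / δ) * δ := by nlinarith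
        _ = surprise p x (i : ℕ) := by field_simp
    · have := Nat.lt_floor_add_one (surprise p x (i : ℕ) / δ)
      calc surprise p x (i : ℕ) = (surprise p x (i : ℕ) / δ) * δ := by field_simp
        _ < ((⌊surprise p x (i : ℕ) / δ⌋₊ : ℝ) + 1) * δ := by nlinarith
  set ℬ : Finset (Finset (Fin t → 𝒳)) :=
    (Finset.univ.filter (fun f : Fin t → Fin N => (bkt f).Nonempty)).image bkt with hℬdef
  refine ⟨ℬ, ?_, ?_, ?_, ?_⟩
  · -- pairwise disjoint
    intro B hB B' hB' hne
    simp only [hℬdef, Finset.coe_image, Set.mem_image] at hB hB'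
    obtain ⟨f, _, rfl⟩ := hB
    obtain ⟨f', _, rfl⟩ := hB'
    show Disjoint (bkt f) (bkt f')
    rw [Finset.disjoint_left]
    intro x hx hx'
    exact hne (by rw [huniq f f' x hx hx'])
  · -- cardinality bound
    have hNpos : 0 < N := by omega
    have hcardB : ℬ.card ≤ N ^ t := by
      calc ℬ.card ≤ (Finset.univ.filter (fun f : Fin t → Fin N => (bkt f).Nonempty)).card :=
            Finset.card_image_le
        _ ≤ (Finset.univ : Finset (Fin t → Fin N)).card := Finset.card_filter_le _ _
        _ = N ^ t := by simp [Fintype.card_fun]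
    have hrhs : Real.logb 2 (N ^ t : ℕ) ≤
        (t:ℝ) * 3 * (Real.logb 2 L + Real.logb 2 E + Real.logb 2 ((t:ℝ)/δ)) := by
      have hNR : ((N:ℝ)) ≤ 2 * ((t:ℝ)/δ) * L * E := by
        have h1 : (⌈M/δ⌉₊ : ℝ) < M/δ + 1 := Nat.ceil_lt_add_one (by positivity)
        have h2 : (N:ℝ) = (⌈M/δ⌉₊ : ℝ) + 1 := by rw [hNdef]; push_cast; ring
        have htδ : (1:ℝ) ≤ (t:ℝ)/δ := by rw [le_div_iff₀ hδ]; linarith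
        have h3 : M/δ ≤ ((t:ℝ)/δ) * L * E := by
          have htL : (2:ℝ) ≤ (t:ℝ) * L := by nlinarith
          have hLE : M ≤ (t:ℝ)*(L*E) := by
            rw [hMdef]
            nlinarith [mul_nonneg (by linarith : (0:ℝ) ≤ (t:ℝ)*L - 2) (by linarith : (0:ℝ) ≤ E - 1)]
          calc M/δ ≤ ((t:ℝ)*(L*E))/δ := by
                gcongr
            _ = ((t:ℝ)/δ) * L * E := by ring
        have h4 : (2:ℝ) ≤ ((t:ℝ)/δ) * L * E := by
          have h5 : (2:ℝ) ≤ ((t:ℝ)/δ) * L := by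
            nlinarith [mul_nonneg (by linarith : (0:ℝ) ≤ (t:ℝ)/δ - 1) (by linarith : (0:ℝ) ≤ L)]
          nlinarith [mul_nonneg (by linarith : (0:ℝ) ≤ ((t:ℝ)/δ) * L) (by linarith : (0:ℝ) ≤ E - 1)]
        linarith
      have hlogt : Real.logb 2 ((t:ℝ)/δ) ≥ 0 := by
        apply Real.logb_nonneg (by norm_num)
        rw [le_div_iff₀ hδ]; linarith
      have hlogL : (1:ℝ) ≤ Real.logb 2 L := by
        calc (1:ℝ) = Real.logb 2 2 := (Real.logb_self_eq_one (by norm_num)).symm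
          _ ≤ Real.logb 2 L := Real.logb_le_logb_of_le (by norm_num) (by norm_num) (by linarith)
      have hlogE : (1:ℝ) ≤ Real.logb 2 E := by
        calc (1:ℝ) = Real.logb 2 2 := (Real.logb_self_eq_one (by norm_num)).symm
          _ ≤ Real.logb 2 E := Real.logb_le_logb_of_le (by norm_num) (by norm_num) (by linarith)
      have hNlog : Real.logb 2 (N^t : ℕ) ≤ (t:ℝ) * Real.logb 2 (N:ℝ) := by
        push_cast
        rw [Real.logb_pow]
      have htδpos : (0:ℝ) < (t:ℝ)/δ := by positivity
      have hlogN : Real.logb 2 (N:ℝ) ≤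
          1 + Real.logb 2 ((t:ℝ)/δ) + Real.logb 2 L + Real.logb 2 E := by
        have hNposR : (0:ℝ) < (N:ℝ) := by exact_mod_cast hNpos
        calc Real.logb 2 (N:ℝ) ≤ Real.logb 2 (2 * ((t:ℝ)/δ) * L * E) :=
              Real.logb_le_logb_of_le (by norm_num) hNposR hNR
          _ = 1 + Real.logb 2 ((t:ℝ)/δ) + Real.logb 2 L + Real.logb 2 E := by
              rw [show (2:ℝ) * ((t:ℝ)/δ) * L * E = 2 * (((t:ℝ)/δ) * (L * E)) by ring]
              rw [Real.logb_mul (by norm_num) (by positivity),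
                  Real.logb_mul (by positivity) (by positivity),
                  Real.logb_mul (by positivity) (by positivity),
                  Real.logb_self_eq_one (by norm_num)]
              ring
      calc Real.logb 2 (N^t : ℕ) ≤ (t:ℝ) * Real.logb 2 (N:ℝ) := hNlog
        _ ≤ (t:ℝ) * (1 + Real.logb 2 ((t:ℝ)/δ) + Real.logb 2 L + Real.logb 2 E) := by
            have : (0:ℝ) ≤ (t:ℝ) := by linarith
            nlinarith [hlogN]
        _ ≤ (t:ℝ) * 3 * (Real.logb 2 L + Real.logb 2 E + Real.logb 2 ((t:ℝ)/δ)) := by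
            nlinarith
    calc Real.logb 2 ℬ.card ≤ Real.logb 2 (N^t : ℕ) := by
          rcases Nat.eq_zero_or_pos ℬ.card with h0 | hpos
          · rw [h0]
            simp only [Nat.cast_zero, Real.logb_zero]
            apply Real.logb_nonneg (by norm_num)
            have : 1 ≤ N^t := Nat.one_le_pow _ _ (by omega)
            exact_mod_cast this
          · apply Real.logb_le_logb_of_le (by norm_num) (by exact_mod_cast hpos)
            exact_mod_cast hcardB
      _ ≤ (t:ℝ) * 3 * (Real.logb 2 L + Real.logb 2 E + Real.logb 2 ((t:ℝ)/δ)) := hrhs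
      _ = (t:ℝ) * 3 * (Real.logb 2 (Real.logb 2 (Fintype.card 𝒳)) +
            Real.logb 2 (Real.logb 2 (1 / ε)) + Real.logb 2 ((t:ℝ)/δ)) := by
          rw [hLdef, hEdef]
  · -- mass bound
    have hdisjbkt : (Finset.univ.filter
        (fun f : Fin t → Fin N => (bkt f).Nonempty) : Set (Fin t → Fin N)).PairwiseDisjoint bkt := by
      intro f hf f' hf' hne
      rw [Function.onFun, Finset.disjoint_left]
      intro x hx hx'
      exact hne (huniq f f' x hx hx')
    have hsum_image : ∑ B ∈ ℬ, ∑ x ∈ B, p x =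
        ∑ f ∈ Finset.univ.filter (fun f : Fin t → Fin N => (bkt f).Nonempty),
          ∑ x ∈ bkt f, p x := by
      rw [hℬdef]
      apply Finset.sum_image
      intro f hf f' hf' heq
      simp only [Finset.mem_coe, Finset.mem_filter] at hf
      obtain ⟨x, hx⟩ := hf.2
      exact huniq f f' x hx (heq ▸ hx)
    have hcover : good ⊆ (Finset.univ.filter
        (fun f : Fin t → Fin N => (bkt f).Nonempty)).biUnion bkt := by
      intro x hx
      obtain ⟨f, hf⟩ := hmem x hx
      apply Finset.mem_biUnion.mpr
      exact ⟨f, Finset.mem_filter.mpr ⟨Finset.mem_univ _, ⟨x, hf⟩⟩, hf⟩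
    have hgoodsum : ∑ x ∈ good, p x ≤ ∑ B ∈ ℬ, ∑ x ∈ B, p x := by
      rw [hsum_image, ← Finset.sum_biUnion hdisjbkt]
      exact Finset.sum_le_sum_of_subset_of_nonneg hcover fun y _ _ => hp y
    have hbad : ∑ x ∈ Finset.univ.filter (fun x => ¬ (τ ≤ p x)), p x ≤ ε := by
      have hcardfun : ((Finset.univ.filter (fun x : Fin t → 𝒳 => ¬ (τ ≤ p x))).card : ℝ)
          ≤ ((Fintype.card 𝒳 : ℝ))^t := by
        calc ((Finset.univ.filter (fun x : Fin t → 𝒳 => ¬ (τ ≤ p x))).card : ℝ)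
            ≤ ((Finset.univ : Finset (Fin t → 𝒳)).card : ℝ) := by
              exact_mod_cast Finset.card_filter_le _ _
          _ = ((Fintype.card 𝒳 : ℝ))^t := by
              rw [Finset.card_univ, Fintype.card_fun, Fintype.card_fin]; push_cast; ring
      calc ∑ x ∈ Finset.univ.filter (fun x => ¬ (τ ≤ p x)), p x
          ≤ ∑ _x ∈ Finset.univ.filter (fun x => ¬ (τ ≤ p x)), τ := by
            apply Finset.sum_le_sum
            intro x hx
            rw [Finset.mem_filter] at hx
            exact le_of_lt (lt_of_not_ge hx.2)
        _ = ((Finset.univ.filter (fun x : Fin t → 𝒳 => ¬ (τ ≤ p x))).card : ℝ) * τ := by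
            rw [Finset.sum_const, nsmul_eq_mul]
        _ ≤ ((Fintype.card 𝒳 : ℝ))^t * τ := by nlinarith
        _ = ε := by rw [hτdef]; field_simp
    have hsplit : ∑ x ∈ good, p x + ∑ x ∈ Finset.univ.filter (fun x => ¬ (τ ≤ p x)), p x = 1 := by
      rw [hgooddef, Finset.sum_filter_add_sum_filter_not, hsum]
    linarith
  · -- flatness
    intro B hB i x hx x' hx' _ _
    simp only [hℬdef, Finset.mem_image] at hB
    obtain ⟨f, _, rfl⟩ := hB
    rw [hbktdef, Finset.mem_filter] at hx hx'
    obtain ⟨hxg, hxb⟩ := hx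
    obtain ⟨hx'g, hx'b⟩ := hx'
    obtain ⟨h1, h2⟩ := hxb i
    obtain ⟨h1', h2'⟩ := hx'b i
    have hpx : 0 < p x := hgoodpos x hxg
    have hpx' : 0 < p x' := hgoodpos x' hx'g
    have hcx : 0 < condStep p x (i:ℕ) :=
      lt_of_lt_of_le hpx (le_condStep hp hsum hpx (i:ℕ))
    have hcx' : 0 < condStep p x' (i:ℕ) :=
      lt_of_lt_of_le hpx' (le_condStep hp hsum hpx' (i:ℕ))
    have hdiff : Real.logb 2 (condStep p x (i:ℕ)) ≤
        Real.logb 2 (condStep p x' (i:ℕ)) + δ := by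
      simp only [surprise] at h1 h2 h1' h2'
      linarith
    have key : condStep p x (i:ℕ) ≤ (2:ℝ) ^ (δ) * condStep p x' (i:ℕ) := by
      have e1 : condStep p x (i:ℕ) = (2:ℝ) ^ (Real.logb 2 (condStep p x (i:ℕ))) :=
        (Real.rpow_logb (by norm_num) (by norm_num) hcx).symm
      have e2 : condStep p x' (i:ℕ) = (2:ℝ) ^ (Real.logb 2 (condStep p x' (i:ℕ))) :=
        (Real.rpow_logb (by norm_num) (by norm_num) hcx').symm
      calc condStep p x (i:ℕ) = (2:ℝ) ^ (Real.logb 2 (condStep p x (i:ℕ))) := e1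
        _ ≤ (2:ℝ) ^ (Real.logb 2 (condStep p x' (i:ℕ)) + δ) :=
            Real.rpow_le_rpow_of_exponent_le (by norm_num) hdiff
        _ = (2:ℝ) ^ (δ) * (2:ℝ) ^ (Real.logb 2 (condStep p x' (i:ℕ))) := by
            rw [← Real.rpow_add (by norm_num)]; ring_nf
        _ = (2:ℝ) ^ (δ) * condStep p x' (i:ℕ) := by rw [← e2]
    have hexp : (2:ℝ) ^ (δ) ≤ (2:ℝ) ^ ((3:ℝ) * δ) :=
      Real.rpow_le_rpow_of_exponent_le (by norm_num) (by nlinarith)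
    calc condStep p x (i:ℕ) ≤ (2:ℝ) ^ (δ) * condStep p x' (i:ℕ) := key
      _ ≤ (2:ℝ) ^ ((3:ℝ) * δ) * condStep p x' (i:ℕ) := by nlinarith
end
end
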